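/- arXiv:2410.21434 — 11 statements merged into one kernel-verified Lean document; each statement's English description precedes it below -/
import Mathlib

section
/- Let (X, τ, 𝔐, μ) be a topological measure space (μ a nonnegative measure on a σ-algebra 𝔐 containing all Borel sets) such that every open set U ⊆ X can be written as U = F ∪ Z where F is an F_σ set and Z is a μ-null set. Then for every Borel set B with μ(B) < ∞ and every ε > 0, there exists a closed set C ⊆ B with μ(B \ C) < ε. -/
/-!
Continuity from below turns the decomposition of an open set into an `Fσ` set and a null set
into inner approximation of the open set by finite unions of closed sets. For a finite
measure on the Borel σ-algebra this inner regularity on open sets upgrades to weak regularity,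
which approximates every Borel set from inside by closed sets. The measure is made finite and
Borel by restricting it to `B` and trimming it to the Borel sets.
-/

open MeasureTheory Set
open scoped ENNReal

namespace MeasureTheory.Measure

variable {X : Type*} [TopologicalSpace X]

/-- Every open set `U` is `F ∪ Z` with `F` an `Fσ` set and `Z` null; `Z = U \ F` is the smallest
choice. -/
def OpensAEFσ {m : MeasurableSpace X} (μ : Measure X) : Prop :=
  ∀ U, IsOpen U → ∃ C : ℕ → Set X, (∀ n, IsClosed (C n)) ∧ ⋃ n, C n ⊆ U ∧ μ (U \ ⋃ n, C n) = 0

theorem OpensAEFσ.restrict {m : MeasurableSpace X} {μ : Measure X} (hμ : μ.OpensAEFσ)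
    (B : Set X) : (μ.restrict B).OpensAEFσ := fun U hU ↦ by
  obtain ⟨C, hC, hCU, hnull⟩ := hμ U hU
  exact ⟨C, hC, hCU, le_zero_iff.1 (hnull ▸ restrict_le_self _)⟩

theorem OpensAEFσ.trim {m0 m : MeasurableSpace X} [@OpensMeasurableSpace X _ m]
    {μ : @Measure X m0} (hμ : μ.OpensAEFσ) (hm : m ≤ m0) : (μ.trim hm).OpensAEFσ := fun U hU ↦ by
  obtain ⟨C, hC, hCU, hnull⟩ := hμ U hU
  refine ⟨C, hC, hCU, ?_⟩
  rwa [trim_measurableSet_eq hm (hU.measurableSet.diff (.iUnion fun n ↦ (hC n).measurableSet))]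

theorem OpensAEFσ.innerRegularWRT_isClosed_isOpen {m : MeasurableSpace X} {μ : Measure X}
    (hμ : μ.OpensAEFσ) : μ.InnerRegularWRT IsClosed IsOpen := by
  intro U hU r hr
  obtain ⟨C, hC, hCU, hnull⟩ := hμ U hU
  have hUC : μ U ≤ ⨆ n, μ (accumulate C n) := by
    rw [← measure_iUnion_eq_iSup_accumulate]
    exact measure_mono_ae (ae_le_set.2 hnull)
  obtain ⟨n, hn⟩ := lt_iSup_iff.1 (hr.trans_le hUC)
  refine ⟨accumulate C n, (accumulate_subset_iUnion n).trans hCU, ?_, hn⟩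
  rw [accumulate_def]
  exact (finite_Iic n).isClosed_biUnion fun i _ ↦ hC i

theorem OpensAEFσ.weaklyRegular [MeasurableSpace X] [BorelSpace X] {μ : Measure X}
    [IsFiniteMeasure μ] (hμ : μ.OpensAEFσ) : μ.WeaklyRegular :=
  hμ.innerRegularWRT_isClosed_isOpen.weaklyRegular_of_finite μ

theorem OpensAEFσ.exists_isClosed_subset_measure_sdiff_lt [MeasurableSpace X]
    [OpensMeasurableSpace X] {μ : Measure X} (hμ : μ.OpensAEFσ) {B : Set X}
    (hB : MeasurableSet[borel X] B) (hBfin : μ B ≠ ∞) {ε : ℝ≥0∞} (hε : ε ≠ 0) :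
    ∃ C, IsClosed C ∧ C ⊆ B ∧ μ (B \ C) < ε := by
  have hm : borel X ≤ ‹MeasurableSpace X› := OpensMeasurableSpace.borel_le
  have : Fact (μ B < ∞) := ⟨hBfin.lt_top⟩
  -- From here on instance search sees the Borel σ-algebra, the space of `(μ.restrict B).trim hm`.
  let : MeasurableSpace X := borel X
  have : BorelSpace X := ⟨rfl⟩
  set ν := (μ.restrict B).trim hm
  have : ν.WeaklyRegular := ((hμ.restrict B).trim hm).weaklyRegular
  obtain ⟨C, hCB, hC, hνC⟩ := hB.exists_isClosed_sdiff_lt (measure_ne_top ν B) hε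
  refine ⟨C, hC, hCB, ?_⟩
  rwa [trim_measurableSet_eq hm (hB.diff hC.measurableSet), restrict_apply' (hm B hB),
    inter_eq_left.2 sdiff_subset] at hνC

end MeasureTheory.Measure

theorem stmt0 {X : Type*} [TopologicalSpace X] [MeasurableSpace X]
    (hBorel : ∀ s : Set X, IsOpen s → MeasurableSet s)
    (μ : Measure X)
    (hFsigma : ∀ U : Set X, IsOpen U →
      ∃ (F Z : Set X) (C : ℕ → Set X),
        (∀ n, IsClosed (C n)) ∧ F = ⋃ n, C n ∧ μ Z = 0 ∧ U = F ∪ Z)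
    (B : Set X) (hB : MeasurableSet[borel X] B) (hBfin : μ B < ⊤)
    (ε : ℝ≥0∞) (hε : 0 < ε) :
    ∃ C : Set X, IsClosed C ∧ C ⊆ B ∧ μ (B \ C) < ε := by
  have : OpensMeasurableSpace X := ⟨MeasurableSpace.generateFrom_le hBorel⟩
  have hμ : μ.OpensAEFσ := fun U hU ↦ by
    obtain ⟨_, Z, C, hC, rfl, hZ, rfl⟩ := hFsigma U hU
    exact ⟨C, hC, subset_union_left, measure_mono_null (fun x hx ↦ hx.1.resolve_left hx.2) hZ⟩
  exact hμ.exists_isClosed_subset_measure_sdiff_lt hB hBfin.ne hε.ne'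
end

section
/- Let (X, τ, 𝔐, μ) be a topological measure space with a countable cover of X by open sets of finite measure. Then the following are equivalent: (i) every open set U ⊆ X can be written as U = F ∪ Z with F an F_σ set and Z null; (ii) for every Borel set B and every ε > 0 there exists an open U ⊇ B with μ(U \ B) < ε; (iii) for every Borel set B and every ε > 0 there exists a closed C ⊆ B with μ(B \ C) < ε. -/
open MeasureTheory Set
open scoped ENNReal

/-!
(ii) and (iii) are exchanged by passing to complements, and (iii) gives (i) by taking the union
of closed sets `C k ⊆ U` with `μ (U \ C k) < 1 / k`. Conversely, (i) makes `μ` inner regular on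
open sets with respect to closed sets. On each `O n` the measure is finite, so the Borel induction
behind `weaklyRegular_of_finite` (applied to the trace `μ.trim` of `μ` on the Borel σ-algebra)
makes `μ.restrict (O n)` outer regular; gluing open approximations of `B ∩ O n` with errors
`δ n` of sum `< ε` gives (ii).
-/

lemma isClosed_accumulate {X : Type*} [TopologicalSpace X] {C : ℕ → Set X}
    (hC : ∀ n, IsClosed (C n)) (k : ℕ) : IsClosed (accumulate C k) :=
  (finite_Iic k).isClosed_biUnion fun i _ => hC i

namespace MeasureTheory

variable {X : Type*} [TopologicalSpace X] [MeasurableSpace X]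

lemma Measure.innerRegularWRT_isClosed_isOpen_of_null_sdiff_iUnion {μ : Measure X}
    (h : ∀ U, IsOpen U → ∃ C : ℕ → Set X,
      (∀ n, IsClosed (C n)) ∧ (∀ n, C n ⊆ U) ∧ μ (U \ ⋃ n, C n) = 0) :
    μ.InnerRegularWRT IsClosed IsOpen := by
  intro U hU r hr
  obtain ⟨C, hC, hCU, hnull⟩ := h U hU
  have hμU : μ U ≤ ⨆ k, μ (accumulate C k) := by
    rw [← measure_iUnion_eq_iSup_accumulate]
    exact measure_mono_ae (ae_le_set.2 hnull)
  obtain ⟨k, hk⟩ := lt_iSup_iff.1 (hr.trans_le hμU)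
  exact ⟨accumulate C k, (accumulate_subset_iUnion k).trans (iUnion_subset hCU),
    isClosed_accumulate hC k, hk⟩

lemma exists_isOpen_sdiff_lt_of_outerRegular_restrict [OpensMeasurableSpace X] {μ : Measure X}
    {O : ℕ → Set X} (hO : ∀ n, IsOpen (O n)) (hcover : ⋃ n, O n = univ)
    (hfin : ∀ n, μ (O n) ≠ ∞) (hreg : ∀ n, (μ.restrict (O n)).OuterRegular)
    {B : Set X} (hB : MeasurableSet B) {ε : ℝ≥0∞} (hε : ε ≠ 0) :
    ∃ U, B ⊆ U ∧ IsOpen U ∧ μ (U \ B) < ε := by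
  obtain ⟨δ, hδpos, hδsum⟩ := ENNReal.exists_pos_sum_of_countable' hε ℕ
  have hpiece : ∀ n, ∃ U, B ∩ O n ⊆ U ∧ IsOpen U ∧ μ (U \ B) < δ n := by
    intro n
    have hBn : μ.restrict (O n) B ≠ ∞ := by
      rw [Measure.restrict_apply hB]
      exact (measure_lt_top_of_subset inter_subset_right (hfin n)).ne
    obtain ⟨U, hBU, hUo, -, hU⟩ := hB.exists_isOpen_sdiff_lt hBn (hδpos n).ne'
    refine ⟨U ∩ O n, inter_subset_inter_left _ hBU, hUo.inter (hO n), ?_⟩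
    rwa [Measure.restrict_apply' (hO n).measurableSet, ← inter_sdiff_right_comm] at hU
  choose U hBU hUo hU using hpiece
  refine ⟨⋃ n, U n, fun x hx => ?_, isOpen_iUnion hUo, ?_⟩
  · obtain ⟨n, hn⟩ := mem_iUnion.1 (hcover ▸ mem_univ x : x ∈ ⋃ n, O n)
    exact mem_iUnion.2 ⟨n, hBU n ⟨hx, hn⟩⟩
  · calc μ ((⋃ n, U n) \ B) = μ (⋃ n, U n \ B) := by rw [iUnion_sdiff]
      _ ≤ ∑' n, μ (U n \ B) := measure_iUnion_le _
      _ ≤ ∑' n, δ n := ENNReal.tsum_le_tsum fun n => (hU n).le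
      _ < ε := hδsum

lemma exists_isOpen_sdiff_lt_of_null_sdiff_iUnion [BorelSpace X] {μ : Measure X}
    {O : ℕ → Set X} (hO : ∀ n, IsOpen (O n)) (hcover : ⋃ n, O n = univ)
    (hfin : ∀ n, μ (O n) ≠ ∞)
    (h : ∀ U, IsOpen U → ∃ C : ℕ → Set X,
      (∀ n, IsClosed (C n)) ∧ (∀ n, C n ⊆ U) ∧ μ (U \ ⋃ n, C n) = 0)
    {B : Set X} (hB : MeasurableSet B) {ε : ℝ≥0∞} (hε : ε ≠ 0) :
    ∃ U, B ⊆ U ∧ IsOpen U ∧ μ (U \ B) < ε := by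
  refine exists_isOpen_sdiff_lt_of_outerRegular_restrict hO hcover hfin (fun n => ?_) hB hε
  have := isFiniteMeasure_restrict.2 (hfin n)
  refine (Measure.InnerRegularWRT.weaklyRegular_of_finite _
    (Measure.innerRegularWRT_isClosed_isOpen_of_null_sdiff_iUnion fun U hU => ?_)).toOuterRegular
  obtain ⟨C, hC, hCU, hnull⟩ := h U hU
  exact ⟨C, hC, hCU, nonpos_iff_eq_zero.1 ((Measure.restrict_apply_le _ _).trans_eq hnull)⟩

lemma exists_isOpen_sdiff_lt_of_null_sdiff_iUnion_borel [OpensMeasurableSpace X] {μ : Measure X}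
    {O : ℕ → Set X} (hO : ∀ n, IsOpen (O n)) (hcover : ⋃ n, O n = univ)
    (hfin : ∀ n, μ (O n) ≠ ∞)
    (h : ∀ U, IsOpen U → ∃ C : ℕ → Set X,
      (∀ n, IsClosed (C n)) ∧ (∀ n, C n ⊆ U) ∧ μ (U \ ⋃ n, C n) = 0)
    {B : Set X} (hB : MeasurableSet[borel X] B) {ε : ℝ≥0∞} (hε : ε ≠ 0) :
    ∃ U, B ⊆ U ∧ IsOpen U ∧ μ (U \ B) < ε := by
  have hopen : ∀ s, IsOpen s → MeasurableSet[borel X] s :=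
    fun s hs => MeasurableSpace.measurableSet_generateFrom hs
  have htrim : ∀ {s}, MeasurableSet[borel X] s → μ.trim OpensMeasurableSpace.borel_le s = μ s :=
    trim_measurableSet_eq _
  have htrim_null : ∀ U, IsOpen U → ∃ C : ℕ → Set X, (∀ n, IsClosed (C n)) ∧ (∀ n, C n ⊆ U) ∧
      μ.trim OpensMeasurableSpace.borel_le (U \ ⋃ n, C n) = 0 := fun U hU => by
    obtain ⟨C, hC, hCU, hnull⟩ := h U hU
    have hCm : MeasurableSet[borel X] (⋃ n, C n) :=
      MeasurableSet.iUnion fun n => (hopen _ (hC n).isOpen_compl).of_compl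
    exact ⟨C, hC, hCU, htrim ((hopen U hU).diff hCm) ▸ hnull⟩
  obtain ⟨U, hBU, hUo, hU⟩ := @exists_isOpen_sdiff_lt_of_null_sdiff_iUnion X _ (borel X)
    (@BorelSpace.mk X _ (borel X) rfl) (μ.trim OpensMeasurableSpace.borel_le) O hO hcover
    (fun n => htrim (hopen _ (hO n)) ▸ hfin n) htrim_null B hB ε hε
  exact ⟨U, hBU, hUo, htrim ((hopen U hUo).diff hB) ▸ hU⟩

lemma exists_iUnion_isClosed_null_sdiff {μ : Measure X} {U : Set X}
    (h : ∀ ε : ℝ≥0∞, 0 < ε → ∃ C, IsClosed C ∧ C ⊆ U ∧ μ (U \ C) < ε) :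
    ∃ C : ℕ → Set X, (∀ n, IsClosed (C n)) ∧ (∀ n, C n ⊆ U) ∧ μ (U \ ⋃ n, C n) = 0 := by
  choose C hC hCU hμC using fun k : ℕ =>
    h (k : ℝ≥0∞)⁻¹ (ENNReal.inv_pos.2 (ENNReal.natCast_ne_top k))
  refine ⟨C, hC, hCU, ?_⟩
  by_contra hne
  obtain ⟨n, hn⟩ := ENNReal.exists_inv_nat_lt hne
  exact lt_irrefl _ ((measure_mono (sdiff_subset_sdiff_right (subset_iUnion C n))).trans_lt
    ((hμC n).trans hn))

end MeasureTheory

theorem stmt2 {X : Type*} [TopologicalSpace X] [MeasurableSpace X]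
    (hBorel : ∀ s : Set X, IsOpen s → MeasurableSet s)
    (μ : Measure X)
    (hcover : ∃ O : ℕ → Set X, (∀ n, IsOpen (O n)) ∧ (⋃ n, O n) = Set.univ ∧ ∀ n, μ (O n) < ⊤) :
    List.TFAE [
      (∀ U : Set X, IsOpen U →
        ∃ (F Z : Set X) (C : ℕ → Set X),
          (∀ n, IsClosed (C n)) ∧ F = ⋃ n, C n ∧ μ Z = 0 ∧ U = F ∪ Z),
      (∀ B : Set X, MeasurableSet[borel X] B → ∀ ε : ℝ≥0∞, 0 < ε →
        ∃ U : Set X, IsOpen U ∧ B ⊆ U ∧ μ (U \ B) < ε),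
      (∀ B : Set X, MeasurableSet[borel X] B → ∀ ε : ℝ≥0∞, 0 < ε →
        ∃ C : Set X, IsClosed C ∧ C ⊆ B ∧ μ (B \ C) < ε)] := by
  obtain ⟨O, hO, hcover, hfin⟩ := hcover
  have : OpensMeasurableSpace X := ⟨MeasurableSpace.generateFrom_le hBorel⟩
  tfae_have 1 → 2 := fun h1 B hB ε hε => by
    have hnull : ∀ U, IsOpen U → ∃ C : ℕ → Set X,
        (∀ n, IsClosed (C n)) ∧ (∀ n, C n ⊆ U) ∧ μ (U \ ⋃ n, C n) = 0 := fun U hU => by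
      obtain ⟨F, Z, C, hC, hF, hZ, hUFZ⟩ := h1 U hU
      subst hUFZ hF
      refine ⟨C, hC, fun n => subset_union_of_subset_left (subset_iUnion C n) Z, ?_⟩
      exact measure_mono_null (fun x hx => hx.1.resolve_left hx.2) hZ
    obtain ⟨U, hBU, hUo, hU⟩ := exists_isOpen_sdiff_lt_of_null_sdiff_iUnion_borel hO hcover
      (fun n => (hfin n).ne) hnull hB hε.ne'
    exact ⟨U, hUo, hBU, hU⟩
  tfae_have 2 → 3 := fun h2 B hB ε hε => by
    obtain ⟨U, hUo, hBU, hU⟩ := h2 Bᶜ hB.compl ε hε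
    refine ⟨Uᶜ, hUo.isClosed_compl, compl_subset_comm.1 hBU, ?_⟩
    rwa [Set.sdiff_compl, inter_comm, ← Set.sdiff_compl]
  tfae_have 3 → 1 := fun h3 U hU => by
    obtain ⟨C, hC, hCU, hnull⟩ :=
      exists_iUnion_isClosed_null_sdiff (h3 U (MeasurableSpace.measurableSet_generateFrom hU))
    exact ⟨⋃ n, C n, U \ ⋃ n, C n, C, hC, rfl, hnull, (union_sdiff_cancel (iUnion_subset hCU)).symm⟩
  tfae_finish
end

section
/- Let (X, τ, 𝔐, μ) be a topological measure space with a countable cover of X by open sets of finite measure. Then the following are equivalent: (a) μ is Borel regular and every open set is the union of an F_σ set and a null set; (b) μ is outer regular on 𝔐, i.e. μ(E) = inf{μ(O): O open, O ⊇ E} for every E ∈ 𝔐; (c) μ is inner regular on 𝔐, i.e. μ(E) = sup{μ(C): C closed, C ⊆ E} for every E ∈ 𝔐. -/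
open MeasureTheory Set Topology
open scoped ENNReal NNReal

/-! All three conditions are equivalent to the approximation property: every measurable `E`
lies in open sets `U` with `μ (U \ E)` arbitrarily small. Thanks to the cover by open sets `O n`
of finite measure the property is local, so it follows from outer regularity (applied to
`E ∩ O n`) and from inner regularity by closed sets (applied to `O n \ E`: a closed `C ⊆ O n \ E`
gives the open set `O n \ C ⊇ E ∩ O n`). Conversely it gives (b), (c), a `G_δ` hull of `E`, and,
applied to complements, an `F_σ` subset of full measure in each open set.
The `F_σ` condition makes `μ` inner regular by closed sets on open sets; on each `O n` the
restriction of `μ` to the Borel sets is then a finite weakly regular measure, so Borel sets have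
the approximation property, which Borel regularity passes on to measurable sets of finite
measure. -/

namespace MeasureTheory.Measure

theorem InnerRegularWRT.trim {α : Type*} {m m0 : MeasurableSpace α} {μ : Measure α} (hm : m ≤ m0)
    {p q : Set α → Prop} (H : μ.InnerRegularWRT p q) (hp : ∀ s, p s → MeasurableSet[m] s)
    (hq : ∀ s, q s → MeasurableSet[m] s) : (μ.trim hm).InnerRegularWRT p q := by
  intro U hU r hr
  rw [trim_measurableSet_eq hm (hq U hU)] at hr
  obtain ⟨K, hKU, hK, hrK⟩ := H hU r hr
  exact ⟨K, hKU, hK, by rwa [trim_measurableSet_eq hm (hp K hK)]⟩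

variable {X : Type*} [TopologicalSpace X] {m0 : MeasurableSpace X} {μ : Measure X} {A B : Set X}

def IsBorelRegular (μ : Measure X) : Prop :=
  ∀ E, MeasurableSet E → ∃ B, MeasurableSet[borel X] B ∧ E ⊆ B ∧ μ B = μ E

def ApproxByOpen (μ : Measure X) (A : Set X) : Prop :=
  ∀ ε ≠ 0, ∃ U, IsOpen U ∧ A ⊆ U ∧ μ (U \ A) ≤ ε

def ApproxByClosed (μ : Measure X) (A : Set X) : Prop :=
  ∀ ε ≠ 0, ∃ C, IsClosed C ∧ C ⊆ A ∧ μ (A \ C) ≤ ε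

theorem approxByClosed_iff_approxByOpen_compl : μ.ApproxByClosed A ↔ μ.ApproxByOpen Aᶜ := by
  refine ⟨fun h ε hε => ?_, fun h ε hε => ?_⟩
  · obtain ⟨C, hC, hCA, hle⟩ := h ε hε
    exact ⟨Cᶜ, hC.isOpen_compl, compl_subset_compl.2 hCA, by rwa [compl_sdiff_compl]⟩
  · obtain ⟨U, hU, hAU, hle⟩ := h ε hε
    exact ⟨Uᶜ, hU.isClosed_compl, compl_subset_comm.1 hAU,
      by rwa [sdiff_compl, inter_comm, ← sdiff_compl]⟩

theorem ApproxByOpen.iUnion {A : ℕ → Set X} (h : ∀ n, μ.ApproxByOpen (A n)) :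
    μ.ApproxByOpen (⋃ n, A n) := by
  intro ε hε
  obtain ⟨δ, hδ, hδε⟩ := ENNReal.exists_pos_sum_of_countable' hε ℕ
  choose U hU hAU hUA using fun n => h n (δ n) (hδ n).ne'
  refine ⟨⋃ n, U n, isOpen_iUnion hU, iUnion_mono hAU, ?_⟩
  calc μ ((⋃ n, U n) \ ⋃ n, A n) ≤ μ (⋃ n, U n \ A n) := by
        rw [iUnion_sdiff]
        exact measure_mono (iUnion_mono fun n => sdiff_subset_sdiff_right (subset_iUnion A n))
    _ ≤ ∑' n, μ (U n \ A n) := measure_iUnion_le _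
    _ ≤ ∑' n, δ n := ENNReal.tsum_le_tsum hUA
    _ ≤ ε := hδε.le

theorem approxByOpen_of_forall_inter {s : ℕ → Set X} (hs : ⋃ n, s n = univ)
    (h : ∀ n, μ.ApproxByOpen (A ∩ s n)) : μ.ApproxByOpen A := by
  simpa only [← inter_iUnion, hs, inter_univ] using ApproxByOpen.iUnion h

theorem ApproxByOpen.inter_isOpen (h : μ.ApproxByOpen A) {O : Set X} (hO : IsOpen O) :
    μ.ApproxByOpen (A ∩ O) := by
  intro ε hε
  obtain ⟨U, hU, hAU, hUA⟩ := h ε hε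
  refine ⟨U ∩ O, hU.inter hO, inter_subset_inter_left O hAU, le_trans (measure_mono ?_) hUA⟩
  exact fun x hx => ⟨hx.1.1, fun hxA => hx.2 ⟨hxA, hx.1.2⟩⟩

theorem ApproxByOpen.of_subset_of_measure_sdiff_eq_zero (h : μ.ApproxByOpen B) (hAB : A ⊆ B)
    (hBA : μ (B \ A) = 0) : μ.ApproxByOpen A := by
  intro ε hε
  obtain ⟨U, hU, hBU, hUB⟩ := h ε hε
  refine ⟨U, hU, hAB.trans hBU, ?_⟩
  calc μ (U \ A) ≤ μ (U \ B ∪ B \ A) := measure_mono fun x hx => by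
        by_cases hxB : x ∈ B
        exacts [Or.inr ⟨hxB, hx.2⟩, Or.inl ⟨hx.1, hxB⟩]
    _ ≤ μ (U \ B) + μ (B \ A) := measure_union_le _ _
    _ ≤ ε := by rwa [hBA, add_zero]

theorem ApproxByOpen.exists_isOpen_lt (h : μ.ApproxByOpen A) {r : ℝ≥0∞} (hr : μ A < r) :
    ∃ U ⊇ A, IsOpen U ∧ μ U < r := by
  obtain ⟨ε, hε, hεr⟩ := ENNReal.lt_iff_exists_add_pos_lt.1 hr
  obtain ⟨U, hU, hAU, hUA⟩ := h ε (by exact_mod_cast hε.ne')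
  refine ⟨U, hAU, hU, lt_of_le_of_lt ?_ hεr⟩
  calc μ U ≤ μ (U ∩ A) + μ (U \ A) := measure_le_inter_add_sdiff μ U A
    _ ≤ μ A + ε := add_le_add (measure_mono inter_subset_right) hUA

theorem ApproxByClosed.exists_isClosed_lt (h : μ.ApproxByClosed A) {r : ℝ≥0∞} (hr : r < μ A) :
    ∃ C ⊆ A, IsClosed C ∧ r < μ C := by
  obtain ⟨ε, hε, hεr⟩ := ENNReal.lt_iff_exists_add_pos_lt.1 hr
  obtain ⟨C, hC, hCA, hAC⟩ := h ε (by exact_mod_cast hε.ne')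
  refine ⟨C, hCA, hC, (ENNReal.add_lt_add_iff_right ENNReal.coe_ne_top).1 (hεr.trans_le ?_)⟩
  calc μ A ≤ μ (A ∩ C) + μ (A \ C) := measure_le_inter_add_sdiff μ A C
    _ ≤ μ C + ε := add_le_add (measure_mono inter_subset_right) hAC

theorem ApproxByOpen.exists_iInter_isOpen (h : μ.ApproxByOpen A) :
    ∃ U : ℕ → Set X, (∀ n, IsOpen (U n)) ∧ A ⊆ ⋂ n, U n ∧ μ ((⋂ n, U n) \ A) = 0 := by
  choose U hU hAU hUA using fun n : ℕ => h (n : ℝ≥0∞)⁻¹ (ENNReal.inv_ne_zero.2 (by simp))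
  refine ⟨U, hU, subset_iInter hAU, ?_⟩
  by_contra hne
  obtain ⟨n, hn⟩ := ENNReal.exists_inv_nat_lt hne
  exact (hn.trans_le ((measure_mono (sdiff_subset_sdiff_left (iInter_subset U n))).trans
    (hUA n))).false

theorem ApproxByClosed.exists_iUnion_isClosed (h : μ.ApproxByClosed A) :
    ∃ C : ℕ → Set X, (∀ n, IsClosed (C n)) ∧ ⋃ n, C n ⊆ A ∧ μ (A \ ⋃ n, C n) = 0 := by
  obtain ⟨U, hU, hAU, hUA⟩ := (approxByClosed_iff_approxByOpen_compl.1 h).exists_iInter_isOpen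
  refine ⟨fun n => (U n)ᶜ, fun n => (hU n).isClosed_compl, ?_, ?_⟩
  · rw [← compl_iInter]; exact compl_subset_comm.1 hAU
  · rwa [← compl_iInter, sdiff_compl, inter_comm, ← sdiff_compl]

theorem innerRegularWRT_isClosed_isOpen_of_exists_iUnion_isClosed
    (h : ∀ U, IsOpen U → ∃ C : ℕ → Set X, (∀ n, IsClosed (C n)) ∧ ⋃ n, C n ⊆ U ∧
      μ (U \ ⋃ n, C n) = 0) :
    μ.InnerRegularWRT IsClosed IsOpen := by
  intro U hU r hr
  obtain ⟨C, hC, hCU, hUC⟩ := h U hU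
  rw [← measure_eq_measure_of_null_sdiff hCU hUC, measure_iUnion_eq_iSup_accumulate,
    lt_iSup_iff] at hr
  obtain ⟨N, hN⟩ := hr
  exact ⟨accumulate C N, (accumulate_subset_iUnion N).trans hCU,
    (finite_Iic N).isClosed_biUnion fun n _ => hC n, hN⟩

theorem isBorelRegular_of_forall_approxByOpen (h : ∀ E, MeasurableSet E → μ.ApproxByOpen E) :
    μ.IsBorelRegular := by
  intro E hE
  obtain ⟨U, hU, hEU, hUE⟩ := (h E hE).exists_iInter_isOpen
  refine ⟨⋂ n, U n, .iInter fun n => MeasurableSpace.measurableSet_generateFrom (hU n), hEU, ?_⟩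
  exact (measure_eq_measure_of_null_sdiff hEU hUE).symm

theorem outerRegular_iff_measure_eq_iInf :
    μ.OuterRegular ↔
      ∀ E, MeasurableSet E → μ E = ⨅ (O : Set X) (_ : IsOpen O) (_ : E ⊆ O), μ O := by
  refine ⟨fun h E hE => le_antisymm (le_iInf₂ fun O _ => le_iInf measure_mono) ?_, fun h => ⟨?_⟩⟩
  · refine le_of_forall_gt fun r hr => ?_
    obtain ⟨U, hEU, hU, hUr⟩ := h.outerRegular hE r hr
    exact (iInf₂_le U hU).trans_lt ((iInf_le _ hEU).trans_lt hUr)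
  · intro A hA r hr
    rw [h A hA] at hr
    simp only [iInf_lt_iff] at hr
    obtain ⟨U, hU, hAU, hUr⟩ := hr
    exact ⟨U, hAU, hU, hUr⟩

theorem innerRegularWRT_isClosed_iff_measure_eq_iSup :
    μ.InnerRegularWRT IsClosed MeasurableSet ↔
      ∀ E, MeasurableSet E → μ E = ⨆ (C : Set X) (_ : IsClosed C) (_ : C ⊆ E), μ C := by
  refine ⟨fun h E hE => le_antisymm ?_ (iSup₂_le fun C _ => iSup_le measure_mono), fun h => ?_⟩
  · refine le_of_forall_lt fun r hr => ?_
    obtain ⟨C, hCE, hC, hrC⟩ := h hE r hr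
    exact hrC.trans_le ((le_iSup_of_le hCE le_rfl).trans (le_iSup₂ (f := fun C (_ : IsClosed C) =>
      ⨆ (_ : C ⊆ E), μ C) C hC))
  · intro A hA r hr
    rw [h A hA] at hr
    simp only [lt_iSup_iff] at hr
    obtain ⟨C, hC, hCA, hrC⟩ := hr
    exact ⟨C, hCA, hC, hrC⟩

theorem outerRegular_of_forall_approxByOpen (h : ∀ E, MeasurableSet E → μ.ApproxByOpen E) :
    μ.OuterRegular :=
  ⟨fun _ hA _ hr => (h _ hA).exists_isOpen_lt hr⟩

theorem innerRegularWRT_isClosed_of_forall_approxByOpen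
    (h : ∀ E, MeasurableSet E → μ.ApproxByOpen E) :
    μ.InnerRegularWRT IsClosed MeasurableSet := fun _ hA _ hr =>
  (approxByClosed_iff_approxByOpen_compl.2 (h _ hA.compl)).exists_isClosed_lt hr

theorem FiniteSpanningSetsIn.measure_inter_ne_top (S : μ.FiniteSpanningSetsIn {U | IsOpen U})
    (E : Set X) (n : ℕ) : μ (E ∩ S.set n) ≠ ∞ :=
  ((measure_mono inter_subset_right).trans_lt (S.finite n)).ne

theorem InnerRegularWRT.restrict_isOpen [OpensMeasurableSpace X]
    (H : μ.InnerRegularWRT IsClosed IsOpen) {O : Set X} (hO : IsOpen O) :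
    (μ.restrict O).InnerRegularWRT IsClosed IsOpen := by
  intro U hU r hr
  rw [restrict_apply hU.measurableSet] at hr
  obtain ⟨C, hCU, hC, hrC⟩ := H (hU.inter hO) r hr
  refine ⟨C, hCU.trans inter_subset_left, hC, ?_⟩
  rwa [restrict_apply hC.measurableSet, inter_eq_self_of_subset_left (hCU.trans inter_subset_right)]

theorem InnerRegularWRT.outerRegular [BorelSpace X] (H : μ.InnerRegularWRT IsClosed IsOpen)
    (S : μ.FiniteSpanningSetsIn {U | IsOpen U}) : μ.OuterRegular := by
  refine OuterRegular.of_restrict (fun n => ?_) S.set_mem S.spanning.ge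
  have : IsFiniteMeasure (μ.restrict (S.set n)) :=
    ⟨by rw [restrict_apply_univ]; exact S.finite n⟩
  exact (InnerRegularWRT.weaklyRegular_of_finite _ (H.restrict_isOpen (S.set_mem n))).toOuterRegular

section OpensMeasurable

variable [OpensMeasurableSpace X] {E : Set X}

theorem OuterRegular.approxByOpen [μ.OuterRegular] (S : μ.FiniteSpanningSetsIn {U | IsOpen U})
    (hE : MeasurableSet E) : μ.ApproxByOpen E := by
  refine approxByOpen_of_forall_inter S.spanning fun n ε hε => ?_
  obtain ⟨U, hEU, hU, -, hUE⟩ := (hE.inter (S.set_mem n).measurableSet).exists_isOpen_sdiff_lt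
    (S.measure_inter_ne_top E n) hε
  exact ⟨U, hU, hEU, hUE.le⟩

theorem InnerRegularWRT.approxByClosed (H : μ.InnerRegularWRT IsClosed MeasurableSet)
    (hA : MeasurableSet A) (hA' : μ A ≠ ∞) : μ.ApproxByClosed A := fun ε hε => by
  obtain ⟨C, hCA, hC, hAC⟩ := H.exists_subset_lt_add isClosed_empty hA hA' hε
  refine ⟨C, hC, hCA, ?_⟩
  rw [measure_sdiff hCA hC.measurableSet.nullMeasurableSet
    (ne_top_of_le_ne_top hA' (measure_mono hCA))]
  exact tsub_le_iff_left.2 hAC.le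

theorem InnerRegularWRT.approxByOpen (H : μ.InnerRegularWRT IsClosed MeasurableSet)
    (S : μ.FiniteSpanningSetsIn {U | IsOpen U}) (hE : MeasurableSet E) : μ.ApproxByOpen E := by
  refine approxByOpen_of_forall_inter S.spanning fun n => ?_
  have hO : IsOpen (S.set n) := S.set_mem n
  have hfin : μ (S.set n \ E) ≠ ∞ := by
    simpa only [sdiff_eq, inter_comm] using S.measure_inter_ne_top Eᶜ n
  have hset : (S.set n \ E)ᶜ ∩ S.set n = E ∩ S.set n := by
    ext x; simp only [mem_inter_iff, mem_compl_iff, mem_sdiff]; tauto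
  rw [← hset]
  exact (approxByClosed_iff_approxByOpen_compl.1
    (H.approxByClosed (hO.measurableSet.diff hE) hfin)).inter_isOpen hO

theorem outerRegular_iff_forall_approxByOpen (S : μ.FiniteSpanningSetsIn {U | IsOpen U}) :
    μ.OuterRegular ↔ ∀ E, MeasurableSet E → μ.ApproxByOpen E :=
  ⟨fun _ _ hE => OuterRegular.approxByOpen S hE, outerRegular_of_forall_approxByOpen⟩

theorem innerRegularWRT_isClosed_iff_forall_approxByOpen
    (S : μ.FiniteSpanningSetsIn {U | IsOpen U}) :
    μ.InnerRegularWRT IsClosed MeasurableSet ↔ ∀ E, MeasurableSet E → μ.ApproxByOpen E :=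
  ⟨fun H _ hE => H.approxByOpen S hE, innerRegularWRT_isClosed_of_forall_approxByOpen⟩

theorem InnerRegularWRT.approxByOpen_of_measurableSet_borel
    (H : μ.InnerRegularWRT IsClosed IsOpen) (S : μ.FiniteSpanningSetsIn {U | IsOpen U})
    (hB : MeasurableSet[borel X] B) :
    μ.ApproxByOpen B := by
  have hm : borel X ≤ m0 := OpensMeasurableSpace.borel_le
  have hborel : ∀ U, IsOpen U → MeasurableSet[borel X] U := fun _ =>
    MeasurableSpace.measurableSet_generateFrom
  have hν : ∀ s, MeasurableSet[borel X] s → μ.trim hm s = μ s := fun _ => trim_measurableSet_eq hm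
  -- `μ.trim hm` lives on a Borel space, where the finite-measure regularity theory applies.
  have := @BorelSpace.mk X _ (borel X) _root_.rfl
  let S' : (μ.trim hm).FiniteSpanningSetsIn {U | IsOpen U} :=
    ⟨S.set, S.set_mem, fun n => (hν _ (hborel _ (S.set_mem n))).trans_lt (S.finite n), S.spanning⟩
  have : @OuterRegular X (borel X) _ (μ.trim hm) :=
    (H.trim hm (fun C hC => (hborel _ hC.isOpen_compl).of_compl) hborel).outerRegular S'
  intro ε hε
  obtain ⟨U, hU, hBU, hUB⟩ := OuterRegular.approxByOpen S' hB ε hε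
  exact ⟨U, hU, hBU, by rwa [← hν _ ((hborel U hU).diff hB)]⟩

theorem IsBorelRegular.approxByOpen (hμ : μ.IsBorelRegular)
    (H : μ.InnerRegularWRT IsClosed IsOpen) (S : μ.FiniteSpanningSetsIn {U | IsOpen U})
    (hE : MeasurableSet E) : μ.ApproxByOpen E := by
  refine approxByOpen_of_forall_inter S.spanning fun n => ?_
  have hfin := S.measure_inter_ne_top E n
  obtain ⟨B, hB, hEB, hBE⟩ := hμ _ (hE.inter (S.set_mem n).measurableSet)
  refine (H.approxByOpen_of_measurableSet_borel S hB).of_subset_of_measure_sdiff_eq_zero hEB ?_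
  rw [measure_sdiff hEB (hE.inter (S.set_mem n).measurableSet).nullMeasurableSet hfin, hBE,
    tsub_self]

theorem forall_approxByOpen_iff_isBorelRegular (S : μ.FiniteSpanningSetsIn {U | IsOpen U}) :
    (∀ E, MeasurableSet E → μ.ApproxByOpen E) ↔ μ.IsBorelRegular ∧
      ∀ U, IsOpen U → ∃ (F Z : Set X) (C : ℕ → Set X),
        (∀ n, IsClosed (C n)) ∧ F = ⋃ n, C n ∧ μ Z = 0 ∧ U = F ∪ Z := by
  refine ⟨fun h => ⟨isBorelRegular_of_forall_approxByOpen h, fun U hU => ?_⟩,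
    fun ⟨hμ, hF⟩ _ hE => hμ.approxByOpen ?_ S hE⟩
  · obtain ⟨C, hC, hCU, hUC⟩ :=
      (approxByClosed_iff_approxByOpen_compl.2 (h _ hU.measurableSet.compl)).exists_iUnion_isClosed
    exact ⟨_, _, C, hC, rfl, hUC, (union_sdiff_cancel hCU).symm⟩
  · refine innerRegularWRT_isClosed_isOpen_of_exists_iUnion_isClosed fun U hU => ?_
    obtain ⟨F, Z, C, hC, rfl, hZ, rfl⟩ := hF U hU
    exact ⟨C, hC, subset_union_left, measure_mono_null (fun x hx => hx.1.resolve_left hx.2) hZ⟩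

end OpensMeasurable

end MeasureTheory.Measure

open Measure in
theorem stmt3 {X : Type*} [TopologicalSpace X] [MeasurableSpace X]
    (hBorel : ∀ s : Set X, IsOpen s → MeasurableSet s)
    (μ : Measure X)
    (hcover : ∃ O : ℕ → Set X, (∀ n, IsOpen (O n)) ∧ (⋃ n, O n) = Set.univ ∧ ∀ n, μ (O n) < ⊤) :
    List.TFAE [
      ((∀ E : Set X, MeasurableSet E →
        ∃ B : Set X, MeasurableSet[borel X] B ∧ E ⊆ B ∧ μ B = μ E) ∧
       (∀ U : Set X, IsOpen U →
        ∃ (F Z : Set X) (C : ℕ → Set X),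
          (∀ n, IsClosed (C n)) ∧ F = ⋃ n, C n ∧ μ Z = 0 ∧ U = F ∪ Z)),
      (∀ E : Set X, MeasurableSet E →
        μ E = ⨅ (O : Set X) (_ : IsOpen O) (_ : E ⊆ O), μ O),
      (∀ E : Set X, MeasurableSet E →
        μ E = ⨆ (C : Set X) (_ : IsClosed C) (_ : C ⊆ E), μ C)] := by
  obtain ⟨O, hO, hOu, hOfin⟩ := hcover
  have : OpensMeasurableSpace X := ⟨MeasurableSpace.generateFrom_le hBorel⟩
  let S : μ.FiniteSpanningSetsIn {U | IsOpen U} := ⟨O, hO, hOfin, hOu⟩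
  have h₁ := forall_approxByOpen_iff_isBorelRegular S
  have h₂ := (outerRegular_iff_forall_approxByOpen S).symm.trans outerRegular_iff_measure_eq_iInf
  have h₃ := (innerRegularWRT_isClosed_iff_forall_approxByOpen S).symm.trans
    innerRegularWRT_isClosed_iff_measure_eq_iSup
  tfae_have 1 ↔ 2 := h₁.symm.trans h₂
  tfae_have 1 ↔ 3 := h₁.symm.trans h₃
  tfae_finish
end

section
/- Let (X, τ, 𝔐, μ) be a topological measure space. Then μ is strongly regular if and only if the weak Lusin theorem holds: for every measurable function u: X → [-∞,∞] and every ε > 0 there exists a closed set C_ε ⊆ X such that μ(X \ C_ε) < ε and the restriction of u to C_ε is continuous (in the subspace topology). -/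
open MeasureTheory Set Topology
open scoped ENNReal NNReal

theorem stmt11 {X : Type*} [TopologicalSpace X] [MeasurableSpace X]
    (hBorel : ∀ s : Set X, IsOpen s → MeasurableSet s)
    (μ : Measure X) :
    (∀ E : Set X, MeasurableSet E → ∀ ε : ℝ≥0∞, 0 < ε →
        ∃ C O : Set X, IsClosed C ∧ IsOpen O ∧ C ⊆ E ∧ E ⊆ O ∧ μ (O \ C) < ε) ↔
    (∀ u : X → EReal, Measurable u → ∀ ε : ℝ≥0∞, 0 < ε →
        ∃ C : Set X, IsClosed C ∧ μ Cᶜ < ε ∧ ContinuousOn u C) := by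
  constructor
  · -- strong regularity → weak Lusin
    intro hreg u hu ε hε
    -- countable basis of EReal
    obtain ⟨b, hbc, -, hbB⟩ := TopologicalSpace.exists_countable_basis EReal
    obtain ⟨f, hf⟩ := (hbc.insert ∅).exists_eq_range (insert_nonempty _ _)
    have hfopen : ∀ n, IsOpen (f n) := by
      intro n
      have : f n ∈ insert ∅ b := hf ▸ mem_range_self n
      rcases this with h | h
      · simp [h]
      · exact hbB.isOpen h
    obtain ⟨δ, hδpos, hδsum⟩ := ENNReal.exists_pos_sum_of_countable' hε.ne' ℕ
    have hchoice : ∀ n : ℕ, ∃ C O : Set X, IsClosed C ∧ IsOpen O ∧ C ⊆ u ⁻¹' (f n) ∧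
        u ⁻¹' (f n) ⊆ O ∧ μ (O \ C) < δ n := by
      intro n
      exact hreg _ (hu (hfopen n).measurableSet) _ (hδpos n)
    choose Cn On hCcl hOop hCsub hOsub hμ using hchoice
    set D : ℕ → Set X := fun n => On n \ Cn n with hD
    have hDopen : ∀ n, IsOpen (D n) := fun n => (hOop n).sdiff (hCcl n)
    refine ⟨(⋃ n, D n)ᶜ, isClosed_compl_iff.2 (isOpen_iUnion hDopen), ?_, ?_⟩
    · rw [compl_compl]
      calc μ (⋃ n, D n) ≤ ∑' n, μ (D n) := measure_iUnion_le _
        _ ≤ ∑' n, δ n := ENNReal.tsum_le_tsum fun n => (hμ n).le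
        _ < ε := hδsum
    · -- continuity on C
      set C : Set X := (⋃ n, D n)ᶜ with hC
      have key : ∀ n, u ⁻¹' (f n) ∩ C = On n ∩ C := by
        intro n
        ext x
        simp only [mem_inter_iff, and_congr_left_iff]
        intro hxC
        have hxD : x ∉ D n := by
          intro hxD
          exact hxC (mem_iUnion.2 ⟨n, hxD⟩)
        constructor
        · intro hx; exact hOsub n hx
        · intro hx
          have : x ∈ Cn n := by
            by_contra h
            exact hxD ⟨hx, h⟩
          exact hCsub n this
      rw [continuousOn_iff']
      intro t ht
      set S := {n | f n ⊆ t} with hS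
      refine ⟨⋃ n ∈ S, On n, isOpen_biUnion fun n _ => hOop n, ?_⟩
      have ht' : t = ⋃ n ∈ S, f n := by
        apply Subset.antisymm
        · intro y hy
          obtain ⟨v, hvb, hyv, hvt⟩ := hbB.exists_subset_of_mem_open hy ht
          have : v ∈ insert ∅ b := mem_insert_of_mem _ hvb
          rw [hf] at this
          obtain ⟨n, rfl⟩ := this
          exact mem_biUnion hvt hyv
        · exact iUnion₂_subset fun n hn => hn
      rw [ht']
      simp only [preimage_iUnion, iUnion_inter]
      exact iUnion_congr fun n => iUnion_congr fun hn => key n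
  · -- weak Lusin → strong regularity
    intro hlusin E hE ε hε
    set u : X → EReal := E.indicator (fun _ => 1) with hu
    have humeas : Measurable u := measurable_const.indicator hE
    obtain ⟨C, hCcl, hCμ, hCcont⟩ := hlusin u humeas ε hε
    have h1 : C ∩ u ⁻¹' {1} = C ∩ E := by
      ext x
      simp only [mem_inter_iff, and_congr_right_iff, mem_preimage, mem_singleton_iff]
      intro _
      by_cases hx : x ∈ E <;> simp [hu, indicator_apply, hx]
    have h0 : C ∩ u ⁻¹' {0} = C ∩ Eᶜ := by
      ext x
      simp only [mem_inter_iff, and_congr_right_iff, mem_preimage, mem_singleton_iff,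
        mem_compl_iff]
      intro _
      by_cases hx : x ∈ E <;> simp [hu, indicator_apply, hx]
    have hC1 : IsClosed (C ∩ E) := by
      rw [← h1]
      exact hCcont.preimage_isClosed_of_isClosed hCcl isClosed_singleton
    have hC0 : IsClosed (C ∩ Eᶜ) := by
      rw [← h0]
      exact hCcont.preimage_isClosed_of_isClosed hCcl isClosed_singleton
    refine ⟨C ∩ E, (C ∩ Eᶜ)ᶜ, hC1, hC0.isOpen_compl, inter_subset_right, ?_, ?_⟩
    · intro x hx hx'
      exact hx'.2 hx
    · have : (C ∩ Eᶜ)ᶜ \ (C ∩ E) = Cᶜ := by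
        ext x
        by_cases hx : x ∈ C <;> by_cases hx' : x ∈ E <;>
          simp [mem_diff, hx, hx']
      rw [this]
      exact hCμ
end

section
/- Let (X, τ, 𝔐, μ) be a topological measure space. Suppose that for every measurable function u: X → [-∞,∞] and every ε > 0 there exists a Borel set B_ε ⊆ X with μ(X \ B_ε) < ε such that the restriction of u to B_ε is continuous in the subspace topology. Then μ is Borel regular. -/
open MeasureTheory Set Topology
open scoped ENNReal NNReal

theorem stmt12 {X : Type*} [TopologicalSpace X] [MeasurableSpace X]
    (hBorel : ∀ s : Set X, IsOpen s → MeasurableSet s)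
    (μ : Measure X)
    (hLusin : ∀ u : X → EReal, Measurable u → ∀ ε : ℝ≥0∞, 0 < ε →
      ∃ B : Set X, MeasurableSet[borel X] B ∧ μ Bᶜ < ε ∧ ContinuousOn u B) :
    ∀ E : Set X, MeasurableSet E →
        ∃ B : Set X, MeasurableSet[borel X] B ∧ E ⊆ B ∧ μ B = μ E := by
  intro E hE
  set u : X → EReal := E.indicator (fun _ => (1 : EReal)) with hu_def
  have hu : Measurable u := (measurable_const.indicator hE)
  -- key step: for each ε > 0 get a Borel set A ⊇ E with μ (A \ E) < ε
  have key : ∀ ε : ℝ≥0∞, 0 < ε →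
      ∃ A : Set X, MeasurableSet[borel X] A ∧ E ⊆ A ∧ μ (A \ E) < ε := by
    intro ε hε
    obtain ⟨B, hBmeas, hBμ, hBcont⟩ := hLusin u hu ε hε
    obtain ⟨O, hO, hOeq⟩ := (continuousOn_iff'.mp hBcont) (Ioi (0 : EReal)) isOpen_Ioi
    have hpre : u ⁻¹' (Ioi (0 : EReal)) = E := by
      ext x
      simp only [hu_def, mem_preimage, mem_Ioi]
      by_cases hx : x ∈ E <;> simp [indicator_of_mem, indicator_of_notMem, hx]
    rw [hpre] at hOeq
    refine ⟨(O ∩ B) ∪ Bᶜ, ?_, ?_, ?_⟩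
    · have hOb : MeasurableSet[borel X] O := by
        rw [borel]
        exact MeasurableSpace.measurableSet_generateFrom hO
      exact ((hOb.inter hBmeas).union hBmeas.compl)
    · intro x hx
      by_cases hxB : x ∈ B
      · left
        have : x ∈ E ∩ B := ⟨hx, hxB⟩
        rw [hOeq] at this
        exact this
      · right; exact hxB
    · have hsub : ((O ∩ B) ∪ Bᶜ) \ E ⊆ Bᶜ := by
        intro x hx
        rcases hx.1 with h | h
        · exfalso
          have : x ∈ E ∩ B := by rw [hOeq]; exact h
          exact hx.2 this.1
        · exact h
      exact lt_of_le_of_lt (measure_mono hsub) hBμ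
  -- choose A n for ε = (n : ℝ≥0∞)⁻¹ and intersect
  have hεpos : ∀ n : ℕ, (0 : ℝ≥0∞) < ((n : ℝ≥0∞))⁻¹ := by
    intro n
    rw [ENNReal.inv_pos]
    exact ENNReal.natCast_ne_top n
  choose A hAmeas hAsub hAμ using fun n : ℕ => key ((n : ℝ≥0∞))⁻¹ (hεpos n)
  refine ⟨⋂ n, A n, MeasurableSet.iInter fun n => hAmeas n, fun x hx => mem_iInter.mpr fun n => hAsub n hx, ?_⟩
  have hdiff : μ ((⋂ n, A n) \ E) = 0 := by
    by_contra h
    obtain ⟨n, hn⟩ := ENNReal.exists_inv_nat_lt h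
    have : μ ((⋂ n, A n) \ E) ≤ μ (A n \ E) :=
      measure_mono (diff_subset_diff_left (iInter_subset _ n))
    exact absurd (this.trans_lt (hAμ n)) (not_lt.mpr hn.le)
  refine le_antisymm ?_ (measure_mono fun x hx => mem_iInter.mpr fun n => hAsub n hx)
  calc μ (⋂ n, A n) ≤ μ (E ∪ ((⋂ n, A n) \ E)) := measure_mono (fun x hx => by
        by_cases hxE : x ∈ E
        · exact Or.inl hxE
        · exact Or.inr ⟨hx, hxE⟩)
    _ ≤ μ E + μ ((⋂ n, A n) \ E) := measure_union_le _ _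
    _ = μ E := by rw [hdiff, add_zero]
end

section
/- Let (X,τ) be a topological space. Then (X,τ) is normal (any two disjoint closed sets can be separated by disjoint open sets) if and only if for every Borel measure μ on X, the topological measure space (X, τ, 𝔐, μ) is almost normal. -/
open MeasureTheory Set Topology
open scoped ENNReal NNReal

instance : TietzeExtension (Set.Icc (0:ℝ) 1) :=
  .of_retract ⟨Subtype.val, continuous_subtype_val⟩
    ⟨Set.projIcc 0 1 zero_le_one, continuous_projIcc⟩
    (by ext x; simp)

instance : TietzeExtension EReal :=
  .of_homeo (EReal.expHomeomorph.trans ENNReal.orderIsoUnitIntervalBirational.toHomeomorph)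

theorem stmt13 {X : Type*} [TopologicalSpace X] :
    NormalSpace X ↔
    (∀ (m : MeasurableSpace X), (∀ s : Set X, IsOpen s → MeasurableSet[m] s) →
      ∀ μ : @MeasureTheory.Measure X m,
        ∀ C : Set X, IsClosed C → ∀ f : X → EReal, ContinuousOn f C →
          ∀ ε : ℝ≥0∞, 0 < ε →
            ∃ (C' : Set X) (F : X → EReal), IsClosed C' ∧ C' ⊆ C ∧ Continuous F ∧
              μ (C \ C') < ε ∧ Set.EqOn F f C') := by
  constructor
  · intro hN m hm μ C hC f hf ε hε
    obtain ⟨F, hF⟩ := ContinuousMap.exists_restrict_eq (Y := EReal) hC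
      ⟨C.restrict f, hf.restrict⟩
    refine ⟨C, F, hC, subset_rfl, F.continuous, by simp [hε], fun x hx => ?_⟩
    exact ContinuousMap.congr_fun hF ⟨x, hx⟩
  · intro h
    refine ⟨fun A B hA hB hAB => ?_⟩
    classical
    set f : X → EReal := fun x => if x ∈ A then 0 else 1 with hfdef
    have hf : ContinuousOn f (A ∪ B) := by
      intro x hx
      rcases hx with hxA | hxB
      · have hxB : x ∉ B := fun hxB => hAB.le_bot ⟨hxA, hxB⟩
        refine (continuousWithinAt_const : ContinuousWithinAt (fun _ => (0:EReal)) (A ∪ B) x).congr_of_eventuallyEq ?_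
          (by simp [hfdef, hxA])
        filter_upwards [mem_nhdsWithin_of_mem_nhds (hB.isOpen_compl.mem_nhds hxB),
          self_mem_nhdsWithin] with y hyB hyAB
        have hyA : y ∈ A := hyAB.resolve_right hyB
        simp [hfdef, hyA]
      · have hxA : x ∉ A := fun hxA => hAB.le_bot ⟨hxA, hxB⟩
        refine (continuousWithinAt_const : ContinuousWithinAt (fun _ => (1:EReal)) (A ∪ B) x).congr_of_eventuallyEq ?_
          (by simp [hfdef, hxA])
        filter_upwards [mem_nhdsWithin_of_mem_nhds (hA.isOpen_compl.mem_nhds hxA)]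
          with y hyA
        simp [hfdef, show y ∉ A from hyA]
    letI m : MeasurableSpace X := ⊤
    haveI : MeasurableSingletonClass X := ⟨fun _ => trivial⟩
    obtain ⟨C', F, hC'closed, hC'sub, hFcont, hμ, hEq⟩ :=
      h ⊤ (fun s _ => trivial) Measure.count (A ∪ B) (hA.union hB) f hf 1 one_pos
    have hC' : A ∪ B ⊆ C' := by
      intro x hx
      by_contra hxC'
      have h1 : (1 : ℝ≥0∞) ≤ Measure.count ((A ∪ B) \ C') := by
        rw [show (1 : ℝ≥0∞) = Measure.count {x} from (Measure.count_singleton x).symm]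
        exact measure_mono (singleton_subset_iff.mpr ⟨hx, hxC'⟩)
      exact absurd (h1.trans_lt hμ) (lt_irrefl _)
    have hF : Set.EqOn F f (A ∪ B) := fun x hx => hEq (hC' hx)
    refine ⟨F ⁻¹' (Iio (((1:ℝ)/2 : ℝ) : EReal)), F ⁻¹' (Ioi (((1:ℝ)/2 : ℝ) : EReal)),
      isOpen_Iio.preimage hFcont, isOpen_Ioi.preimage hFcont, ?_, ?_, ?_⟩
    · intro x hxA
      have : F x = 0 := by rw [hF (Or.inl hxA)]; simp [hfdef, hxA]
      simp only [mem_preimage, mem_Iio, this]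
      exact_mod_cast (by norm_num : (0:ℝ) < 1/2)
    · intro x hxB
      have hxA : x ∉ A := fun hxA => hAB.le_bot ⟨hxA, hxB⟩
      have : F x = 1 := by rw [hF (Or.inr hxB)]; simp [hfdef, hxA]
      simp only [mem_preimage, mem_Ioi, this]
      exact_mod_cast (by norm_num : (1:ℝ)/2 < 1)
    · exact ((Set.Iio_disjoint_Ici le_rfl).mono_right Set.Ioi_subset_Ici_self).preimage F
end

section
/- Let (X, τ, 𝔐, μ) be a topological measure space. Then the strong Lusin theorem holds (for every measurable u: X → [-∞,∞] and every ε > 0 there exist a closed set C_ε with μ(X \ C_ε) < ε and a continuous g: X → [-∞,∞] with g = u on C_ε) if and only if (X, τ, 𝔐, μ) is almost normal and μ is strongly regular. -/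
open MeasureTheory Set Topology
open scoped ENNReal NNReal

theorem stmt14 {X : Type*} [TopologicalSpace X] [MeasurableSpace X]
    (hBorel : ∀ s : Set X, IsOpen s → MeasurableSet s)
    (μ : Measure X) :
    (∀ u : X → EReal, Measurable u → ∀ ε : ℝ≥0∞, 0 < ε →
        ∃ (C : Set X) (g : X → EReal), IsClosed C ∧ Continuous g ∧ μ Cᶜ < ε ∧ Set.EqOn g u C) ↔
    ((∀ C : Set X, IsClosed C → ∀ f : X → EReal, ContinuousOn f C →
        ∀ ε : ℝ≥0∞, 0 < ε →
          ∃ (C' : Set X) (F : X → EReal), IsClosed C' ∧ C' ⊆ C ∧ Continuous F ∧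
            μ (C \ C') < ε ∧ Set.EqOn F f C') ∧
     (∀ E : Set X, MeasurableSet E → ∀ ε : ℝ≥0∞, 0 < ε →
        ∃ C O : Set X, IsClosed C ∧ IsOpen O ∧ C ⊆ E ∧ E ⊆ O ∧ μ (O \ C) < ε)) := by
  haveI hOM : OpensMeasurableSpace X :=
    ⟨by rw [borel]; exact MeasurableSpace.generateFrom_le fun s hs => hBorel s hs⟩
  constructor
  · intro hLusin
    constructor
    · -- almost normal
      intro C hC f hf ε hε
      classical
      have hCm : MeasurableSet C := hC.measurableSet
      have hu : Measurable (C.piecewise f (fun _ => (0 : EReal))) :=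
        hf.measurable_piecewise continuousOn_const hCm
      obtain ⟨D, g, hD, hg, hμD, hEq⟩ := hLusin _ hu ε hε
      refine ⟨C ∩ D, g, hC.inter hD, inter_subset_left, hg, ?_, ?_⟩
      · refine lt_of_le_of_lt (measure_mono ?_) hμD
        intro x hx
        exact fun hxD => hx.2 ⟨hx.1, hxD⟩
      · intro x hx
        have := hEq hx.2
        rwa [Set.piecewise_eq_of_mem _ _ _ hx.1] at this
    · -- strongly regular
      intro E hE ε hε
      classical
      set u : X → EReal := E.indicator (fun _ => (1 : EReal)) with hu_def
      have hu : Measurable u := (measurable_const (a := (1 : EReal))).indicator hE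
      obtain ⟨D, g, hD, hg, hμD, hEq⟩ := hLusin u hu ε hε
      refine ⟨D ∩ g ⁻¹' {1}, Dᶜ ∪ g ⁻¹' ({0}ᶜ),
        hD.inter (isClosed_singleton.preimage hg),
        hD.isOpen_compl.union ((isOpen_compl_singleton).preimage hg), ?_, ?_, ?_⟩
      · rintro x ⟨hxD, hx1⟩
        by_contra hxE
        have : u x = 0 := Set.indicator_of_notMem hxE _
        have : g x = 0 := (hEq hxD).trans this
        rw [Set.mem_preimage, Set.mem_singleton_iff] at hx1
        rw [hx1] at this
        exact one_ne_zero this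
      · intro x hxE
        by_cases hxD : x ∈ D
        · right
          have : u x = 1 := Set.indicator_of_mem hxE _
          have hgx : g x = 1 := (hEq hxD).trans this
          simp [hgx]
        · exact Or.inl hxD
      · refine lt_of_le_of_lt (measure_mono ?_) hμD
        rintro x ⟨hxO, hxC⟩
        intro hxD
        rcases hxO with h | h
        · exact h hxD
        · have hgx : g x ≠ 0 := h
          have hux : u x ≠ 0 := by rwa [hEq hxD] at hgx
          have hxE : x ∈ E := by
            by_contra hxE
            exact hux (Set.indicator_of_notMem hxE _)
          have : g x = 1 := (hEq hxD).trans (Set.indicator_of_mem hxE _)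
          exact hxC ⟨hxD, by simp [this]⟩
  · rintro ⟨hAN, hSR⟩ u hu ε hε
    classical
    obtain ⟨B, hBc, -, hBbasis⟩ := TopologicalSpace.exists_countable_basis EReal
    haveI : Countable ↥B := hBc.to_subtype
    have hε2 : (0 : ℝ≥0∞) < ε / 2 := ENNReal.half_pos hε.ne'
    obtain ⟨δ, hδpos, hδsum⟩ := ENNReal.exists_pos_sum_of_countable hε2.ne' ↥B
    -- for each basic open set, approximate its preimage
    have key : ∀ b : ↥B, ∃ C O : Set X, IsClosed C ∧ IsOpen O ∧
        C ⊆ u ⁻¹' (b : Set EReal) ∧ u ⁻¹' (b : Set EReal) ⊆ O ∧ μ (O \ C) < δ b := by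
      intro b
      exact hSR _ (hu (hBbasis.isOpen b.2).measurableSet) _
        (by exact_mod_cast hδpos b)
    choose C O hC hO hCsub hOsub hμ using key
    set D : Set X := ⋂ b : ↥B, (C b ∪ (O b)ᶜ) with hD_def
    have hDclosed : IsClosed D :=
      isClosed_iInter fun b => (hC b).union (hO b).isClosed_compl
    have hDc : μ Dᶜ < ε / 2 := by
      have h1 : Dᶜ = ⋃ b : ↥B, (O b \ C b) := by
        rw [hD_def, compl_iInter]
        refine iUnion_congr fun b => ?_
        rw [compl_union, compl_compl, inter_comm]
        rfl
      rw [h1]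
      calc μ (⋃ b : ↥B, (O b \ C b)) ≤ ∑' b : ↥B, μ (O b \ C b) := measure_iUnion_le _
        _ ≤ ∑' b : ↥B, (δ b : ℝ≥0∞) := ENNReal.tsum_le_tsum fun b => (hμ b).le
        _ < ε / 2 := hδsum
    -- u is continuous on D
    have hcont : ContinuousOn u D := by
      intro x hx
      intro V hV
      obtain ⟨v, hvB, hxv, hvV⟩ := hBbasis.mem_nhds_iff.mp hV
      have hxO : x ∈ O ⟨v, hvB⟩ := hOsub ⟨v, hvB⟩ hxv
      have hsub : O ⟨v, hvB⟩ ∩ D ⊆ u ⁻¹' V := by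
        rintro y ⟨hyO, hyD⟩
        have := mem_iInter.mp hyD ⟨v, hvB⟩
        rcases this with h | h
        · exact hvV (hCsub ⟨v, hvB⟩ h)
        · exact absurd hyO h
      rw [Filter.mem_map]
      have hmem : O ⟨v, hvB⟩ ∩ D ∈ 𝓝[D] x :=
        Filter.inter_mem (mem_nhdsWithin_of_mem_nhds ((hO _).mem_nhds hxO))
          self_mem_nhdsWithin
      exact Filter.mem_of_superset hmem hsub
    obtain ⟨C', F, hC', hC'sub, hFcont, hμC', hEq⟩ := hAN D hDclosed u hcont (ε / 2) hε2
    refine ⟨C', F, hC', hFcont, ?_, hEq⟩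
    have hsub : C'ᶜ ⊆ Dᶜ ∪ (D \ C') := by
      intro x hx
      by_cases hxD : x ∈ D
      · exact Or.inr ⟨hxD, hx⟩
      · exact Or.inl hxD
    calc μ C'ᶜ ≤ μ (Dᶜ ∪ (D \ C')) := measure_mono hsub
      _ ≤ μ Dᶜ + μ (D \ C') := measure_union_le _ _
      _ < ε / 2 + ε / 2 := ENNReal.add_lt_add hDc hμC'
      _ = ε := ENNReal.add_halves ε
end

section
/- If a topological measure space (X, τ, 𝔐, μ) is almost normal, then the weak Lusin theorem implies the strong Lusin theorem: if for every measurable u: X → [-∞,∞] and ε > 0 there is a closed C_ε with μ(X \ C_ε) < ε and u|_{C_ε} continuous, then for every measurable u and ε > 0 there exist a closed C_ε with μ(X \ C_ε) < ε and a continuous g: X → [-∞,∞] with g = u on C_ε. -/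
open MeasureTheory Set Topology
open scoped ENNReal NNReal

theorem stmt15 {X : Type*} [TopologicalSpace X] [MeasurableSpace X]
    (hBorel : ∀ s : Set X, IsOpen s → MeasurableSet s)
    (μ : Measure X)
    (han : ∀ C : Set X, IsClosed C → ∀ f : X → EReal, ContinuousOn f C →
        ∀ ε : ℝ≥0∞, 0 < ε →
          ∃ (C' : Set X) (F : X → EReal), IsClosed C' ∧ C' ⊆ C ∧ Continuous F ∧
            μ (C \ C') < ε ∧ Set.EqOn F f C')
    (hweak : ∀ u : X → EReal, Measurable u → ∀ ε : ℝ≥0∞, 0 < ε →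
        ∃ C : Set X, IsClosed C ∧ μ Cᶜ < ε ∧ ContinuousOn u C) :
    ∀ u : X → EReal, Measurable u → ∀ ε : ℝ≥0∞, 0 < ε →
        ∃ (C : Set X) (g : X → EReal), IsClosed C ∧ Continuous g ∧ μ Cᶜ < ε ∧ Set.EqOn g u C := by
  intro u hu ε hε
  have hε2 : 0 < ε / 2 := ENNReal.half_pos hε.ne'
  obtain ⟨C, hCcl, hCμ, hCcont⟩ := hweak u hu (ε / 2) hε2
  obtain ⟨C', F, hC'cl, hC'sub, hFcont, hC'μ, hFeq⟩ := han C hCcl u hCcont (ε / 2) hε2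
  refine ⟨C', F, hC'cl, hFcont, ?_, hFeq⟩
  have hsub : C'ᶜ ⊆ Cᶜ ∪ (C \ C') := by
    intro x hx
    by_cases h : x ∈ C
    · exact Or.inr ⟨h, hx⟩
    · exact Or.inl h
  calc μ C'ᶜ ≤ μ (Cᶜ ∪ (C \ C')) := measure_mono hsub
    _ ≤ μ Cᶜ + μ (C \ C') := measure_union_le _ _
    _ < ε / 2 + ε / 2 := ENNReal.add_lt_add hCμ hC'μ
    _ = ε := ENNReal.add_halves ε
end

section
/- Let (X, τ, 𝔐, μ) be a topological measure space with μ σ-finite. Then μ is Borel regular if and only if every measurable function has a Borel representative: for every 𝔐-measurable u: X → [-∞,∞] there exist a Borel set N with μ(N) = 0 and a Borel measurable function f: X → [-∞,∞] with f = u on X \ N. -/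
/-!
Borel regularity and σ-finiteness make every measurable set a.e. equal to a Borel set, and Borel
regularity alone shows that `μ` and its restriction to the Borel sets have the same null sets.
So a measurable `u` is null-measurable for the Borel restriction of `μ`; as the Borel σ-algebra
of `[-∞, ∞]` is countably generated, `u` agrees off a Borel null set with a Borel function.
Conversely, if `f` is a Borel representative of the indicator of `E` off the null set `N`, then
`{f = 1} ∪ N` is a Borel superset of `E` of the same measure.
-/

open MeasureTheory Set

namespace MeasureTheory.Measure

variable {α : Type*} {m₀ m : MeasurableSpace α}

/-- For `m₀ = borel α` this is Borel regularity of `μ`. -/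
def IsRegularFor (m₀ : MeasurableSpace α) (μ : Measure[m] α) : Prop :=
  ∀ E, MeasurableSet[m] E → ∃ B, MeasurableSet[m₀] B ∧ E ⊆ B ∧ μ B = μ E

variable {μ : Measure[m] α}

namespace IsRegularFor

theorem ae_trim (hm : m₀ ≤ m) (hμ : μ.IsRegularFor m₀) : ae (μ.trim hm) = ae μ := by
  have null_iff : ∀ s, μ.trim hm s = 0 ↔ μ s = 0 := fun s ↦ by
    refine ⟨fun hs ↦ le_antisymm (hs ▸ le_trim hm) zero_le, fun hs ↦ ?_⟩
    obtain ⟨B, hB, hsB, hμB⟩ := hμ _ (measurableSet_toMeasurable μ s)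
    refine measure_mono_null (subset_toMeasurable μ s |>.trans hsB) ?_
    rw [trim_measurableSet_eq hm hB, hμB, measure_toMeasurable, hs]
  ext s
  simp only [mem_ae_iff, null_iff]

theorem exists_ae_eq [SigmaFinite μ] (hμ : μ.IsRegularFor m₀) {E : Set α}
    (hE : MeasurableSet[m] E) : ∃ B, MeasurableSet[m₀] B ∧ E =ᵐ[μ] B := by
  choose B hB hEB hμB using fun n ↦ hμ _ (hE.inter (measurableSet_spanningSets μ n))
  refine ⟨⋃ n, B n, .iUnion hB, ?_⟩
  have piece_ae_eq : ∀ n, (E ∩ spanningSets μ n : Set α) =ᵐ[μ] B n := fun n ↦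
    ae_eq_of_subset_of_measure_ge (hEB n) (hμB n).le
      (hE.inter (measurableSet_spanningSets μ n)).nullMeasurableSet
      (hμB n ▸ (measure_mono inter_subset_right).trans_lt
        (measure_spanningSets_lt_top μ n)).ne
  simpa only [← inter_iUnion, iUnion_spanningSets, inter_univ] using
    Filter.EventuallyEq.countable_iUnion piece_ae_eq

theorem nullMeasurableSet_trim [SigmaFinite μ] (hm : m₀ ≤ m) (hμ : μ.IsRegularFor m₀)
    {E : Set α} (hE : MeasurableSet[m] E) : @NullMeasurableSet α m₀ E (μ.trim hm) := by
  obtain ⟨B, hB, hEB⟩ := hμ.exists_ae_eq hE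
  rw [← hμ.ae_trim hm] at hEB
  exact (hB.nullMeasurableSet (m0 := m₀) (μ := μ.trim hm)).congr hEB.symm

theorem exists_measurable_eq_off_null [SigmaFinite μ] (hm : m₀ ≤ m) (hμ : μ.IsRegularFor m₀)
    {β : Type*} [MeasurableSpace β] [MeasurableSpace.CountablyGenerated β] {u : α → β}
    (hu : Measurable[m] u) :
    ∃ (N : Set α) (f : α → β), MeasurableSet[m₀] N ∧ μ N = 0 ∧
      Measurable[m₀] f ∧ ∀ x ∉ N, f x = u x := by
  have hu' : AEMeasurable u (μ.trim hm) :=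
    NullMeasurable.aemeasurable (m0 := m₀) fun _ hs ↦ hμ.nullMeasurableSet_trim hm (hu hs)
  obtain ⟨N, hdiff, hN, hμN⟩ :=
    @exists_measurable_superset_of_null _ m₀ (μ.trim hm) _ (ae_iff.1 hu'.ae_eq_mk)
  exact ⟨N, hu'.mk u, hN, le_antisymm (hμN ▸ le_trim hm) zero_le, hu'.measurable_mk,
    fun x hx ↦ by_contra fun h ↦ hx (hdiff (Ne.symm h))⟩

end IsRegularFor

theorem exists_superset_measure_eq_of_eq_indicator {β : Type*} [MeasurableSpace β]
    [MeasurableSingletonClass β] [Zero β] [One β] [NeZero (1 : β)] {E N : Set α}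
    {f : α → β} (hN : MeasurableSet[m₀] N) (hμN : μ N = 0) (hf : Measurable[m₀] f)
    (hfE : ∀ x ∉ N, f x = E.indicator 1 x) :
    ∃ B, MeasurableSet[m₀] B ∧ E ⊆ B ∧ μ B = μ E := by
  have hEB : E ⊆ f ⁻¹' {1} ∪ N := fun x hx ↦ by
    by_cases hxN : x ∈ N
    · exact .inr hxN
    · exact .inl (by simp [hfE x hxN, hx])
  have hBE : f ⁻¹' {1} ∪ N ⊆ E ∪ N := by
    rintro x (hx | hx)
    · by_cases hxN : x ∈ N
      · exact .inr hxN
      · refine .inl (by_contra fun hxE ↦ ?_)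
        simp [hfE x hxN, hxE] at hx
    · exact .inr hx
  refine ⟨_, (hf (measurableSet_singleton 1)).union hN, hEB, le_antisymm ?_ (measure_mono hEB)⟩
  calc μ (f ⁻¹' {1} ∪ N) ≤ μ (E ∪ N) := measure_mono hBE
    _ ≤ μ E + μ N := measure_union_le E N
    _ = μ E := by rw [hμN, add_zero]

end MeasureTheory.Measure

theorem stmt16 {X : Type*} [TopologicalSpace X] [MeasurableSpace X]
    (hBorel : ∀ s : Set X, IsOpen s → MeasurableSet s)
    (μ : Measure X)
    (hsf : ∃ A : ℕ → Set X, (∀ n, MeasurableSet (A n)) ∧ (⋃ n, A n) = Set.univ ∧ ∀ n, μ (A n) < ⊤) :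
    (∀ E : Set X, MeasurableSet E →
        ∃ B : Set X, MeasurableSet[borel X] B ∧ E ⊆ B ∧ μ B = μ E) ↔
    (∀ u : X → EReal, Measurable u →
        ∃ (N : Set X) (f : X → EReal), MeasurableSet[borel X] N ∧ μ N = 0 ∧
          Measurable[borel X] f ∧ ∀ x ∉ N, f x = u x) := by
  have hle : borel X ≤ ‹MeasurableSpace X› := MeasurableSpace.generateFrom_le hBorel
  obtain ⟨A, -, hA_univ, hA_fin⟩ := hsf
  have : SigmaFinite μ :=
    (⟨A, fun _ ↦ trivial, hA_fin, hA_univ⟩ : μ.FiniteSpanningSetsIn univ).sigmaFinite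
  constructor
  · intro hreg u hu
    exact Measure.IsRegularFor.exists_measurable_eq_off_null hle hreg hu
  · intro h E hE
    obtain ⟨N, f, hN, hμN, hf, hfE⟩ := h _ (measurable_one.indicator hE)
    exact Measure.exists_superset_measure_eq_of_eq_indicator hN hμN hf hfE
end

section
/- Let (X, τ, 𝔐, μ) be a topological measure space (no σ-finiteness assumed). If every 𝔐-measurable function u: X → [-∞,∞] has a Borel representative (a Borel function f and a Borel null set N with f = u on X \ N), then μ is Borel regular. -/
open MeasureTheory Set Topology
open scoped ENNReal NNReal

theorem stmt17 {X : Type*} [TopologicalSpace X] [MeasurableSpace X]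
    (hBorel : ∀ s : Set X, IsOpen s → MeasurableSet s)
    (μ : Measure X)
    (hrep : ∀ u : X → EReal, Measurable u →
        ∃ (N : Set X) (f : X → EReal), MeasurableSet[borel X] N ∧ μ N = 0 ∧
          Measurable[borel X] f ∧ ∀ x ∉ N, f x = u x) :
    ∀ E : Set X, MeasurableSet E →
        ∃ B : Set X, MeasurableSet[borel X] B ∧ E ⊆ B ∧ μ B = μ E := by
  intro E hE
  set u : X → EReal := E.indicator (fun _ => (1 : EReal)) with hu
  have hum : Measurable u := (measurable_const (a := (1:EReal))).indicator hE
  obtain ⟨N, f, hN, hNμ, hf, hfu⟩ := hrep u hum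
  refine ⟨f ⁻¹' {1} ∪ N, ?_, ?_, ?_⟩
  · exact (hf (measurableSet_singleton 1)).union hN
  · intro x hx
    by_cases hxN : x ∈ N
    · exact Or.inr hxN
    · left
      have : f x = u x := hfu x hxN
      simp [this, hu, indicator_of_mem hx]
  · apply le_antisymm
    · have hsub : f ⁻¹' {1} ∪ N ⊆ E ∪ N := by
        intro x hx
        rcases hx with hx | hx
        · by_cases hxN : x ∈ N
          · exact Or.inr hxN
          · left
            have hfx : f x = u x := hfu x hxN
            by_contra hxE
            have : u x = 0 := indicator_of_notMem hxE _
            have h1 : f x = 1 := hx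
            rw [hfx, this] at h1
            exact zero_ne_one h1
        · exact Or.inr hx
      calc μ (f ⁻¹' {1} ∪ N) ≤ μ (E ∪ N) := measure_mono hsub
        _ ≤ μ E + μ N := measure_union_le _ _
        _ = μ E := by rw [hNμ, add_zero]
    · refine measure_mono ?_
      intro x hx
      by_cases hxN : x ∈ N
      · exact Or.inr hxN
      · left
        have : f x = u x := hfu x hxN
        simp [this, hu, indicator_of_mem hx]
end

section
/- Let (X,d) be a metric space and μ a nonnegative measure defined on a σ-algebra 𝔐 containing all Borel sets, with every ball of finite measure. Then μ is Borel regular if and only if the weak Lusin theorem holds: for every 𝔐-measurable u: X → [-∞,∞] and every ε > 0 there exists a closed set C_ε with μ(X \ C_ε) < ε such that u restricted to C_ε is continuous. -/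
open MeasureTheory Set Topology
open scoped ENNReal NNReal

lemma borelMS_of_isOpen {X : Type*} [TopologicalSpace X] {s : Set X} (h : IsOpen s) :
    MeasurableSet[borel X] s :=
  MeasurableSpace.measurableSet_generateFrom h

lemma borelMS_of_isClosed {X : Type*} [TopologicalSpace X] {s : Set X} (h : IsClosed s) :
    MeasurableSet[borel X] s := by
  have := (borelMS_of_isOpen h.isOpen_compl).compl
  rwa [compl_compl] at this

lemma aux_outer {X : Type*} [MetricSpace X] (x₀ : X)
    (μ : @Measure X (borel X))
    (hballs : ∀ (x : X) (r : ℝ), μ (Metric.ball x r) < ⊤) :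
    ∀ A : Set X, ∀ r : ℝ≥0∞, μ A < r → ∃ U, A ⊆ U ∧ IsOpen U ∧ μ U < r := by
  letI : MeasurableSpace X := borel X
  haveI : BorelSpace X := ⟨rfl⟩
  have hsp : ⋃ n : ℕ, Metric.ball x₀ n = univ := by
    ext y
    simp only [mem_iUnion, mem_univ, iff_true]
    obtain ⟨n, hn⟩ := exists_nat_gt (dist y x₀)
    exact ⟨n, by simpa [Metric.mem_ball] using hn⟩
  have h1 : ∀ n : ℕ, (μ.restrict (Metric.ball x₀ n)).OuterRegular := fun n => by
    haveI : Fact (μ (Metric.ball x₀ n) < ∞) := ⟨hballs x₀ n⟩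
    infer_instance
  haveI : μ.OuterRegular :=
    Measure.FiniteSpanningSetsIn.outerRegular
      ⟨fun n => Metric.ball x₀ n, fun n => ⟨Metric.isOpen_ball, h1 n⟩,
        fun n => hballs x₀ n, hsp⟩
  intro A r hr
  exact Set.exists_isOpen_lt_of_lt A r hr

theorem stmt19 {X : Type*} [MetricSpace X] [MeasurableSpace X]
    (hBorel : ∀ s : Set X, IsOpen s → MeasurableSet s)
    (μ : Measure X)
    (hballs : ∀ (x : X) (r : ℝ), μ (Metric.ball x r) < ⊤) :
    (∀ E : Set X, MeasurableSet E →
        ∃ B : Set X, MeasurableSet[borel X] B ∧ E ⊆ B ∧ μ B = μ E) ↔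
    (∀ u : X → EReal, Measurable u → ∀ ε : ℝ≥0∞, 0 < ε →
        ∃ C : Set X, IsClosed C ∧ μ Cᶜ < ε ∧ ContinuousOn u C) := by
  have hle : borel X ≤ ‹MeasurableSpace X› := by
    rw [borel]
    exact MeasurableSpace.generateFrom_le hBorel
  constructor
  · -- Borel regular → weak Lusin
    intro hreg u hu ε hε
    rcases isEmpty_or_nonempty X with hX | hX
    · refine ⟨∅, isClosed_empty, ?_, continuousOn_empty u⟩
      rw [compl_empty, Set.univ_eq_empty_iff.2 hX, measure_empty]
      exact hε
    obtain ⟨x₀⟩ := hX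
    set μ' := μ.trim hle with hμ'
    have hballs' : ∀ (x : X) (r : ℝ), μ' (Metric.ball x r) < ⊤ := fun x r => by
      rw [hμ', trim_measurableSet_eq hle (borelMS_of_isOpen Metric.isOpen_ball)]
      exact hballs x r
    -- every measurable set has an open superset with small measure difference
    have step2 : ∀ A : Set X, MeasurableSet A → ∀ ε : ℝ≥0∞, ε ≠ 0 →
        ∃ U, A ⊆ U ∧ IsOpen U ∧ μ (U \ A) < ε := by
      intro A hA ε hε
      obtain ⟨δ, hδ, hδsum⟩ := ENNReal.exists_pos_sum_of_countable hε ℕ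
      have key : ∀ n : ℕ, ∃ U, A ∩ Metric.ball x₀ n ⊆ U ∧ IsOpen U ∧
          μ U < μ (A ∩ Metric.ball x₀ n) + δ n := by
        intro n
        have hAnm : MeasurableSet (A ∩ Metric.ball x₀ n) :=
          hA.inter (hBorel _ Metric.isOpen_ball)
        have hAnfin : μ (A ∩ Metric.ball x₀ n) ≠ ∞ :=
          ((measure_mono inter_subset_right).trans_lt (hballs x₀ n)).ne
        obtain ⟨B, hBm, hABsub, hBeq⟩ := hreg _ hAnm
        have h2 : μ' B < μ (A ∩ Metric.ball x₀ n) + δ n := by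
          rw [hμ', trim_measurableSet_eq hle hBm, hBeq]
          exact ENNReal.lt_add_right hAnfin (ENNReal.coe_ne_zero.2 (hδ n).ne')
        obtain ⟨U, hBU, hUo, hU⟩ := aux_outer x₀ μ' hballs' B _ h2
        refine ⟨U, hABsub.trans hBU, hUo, ?_⟩
        rwa [hμ', trim_measurableSet_eq hle (borelMS_of_isOpen hUo)] at hU
      choose U hAU hUo hU using key
      refine ⟨⋃ n, U n, ?_, isOpen_iUnion hUo, ?_⟩
      · intro x hx
        obtain ⟨n, hn⟩ := exists_nat_gt (dist x x₀)
        exact mem_iUnion.2 ⟨n, hAU n ⟨hx, by simpa [Metric.mem_ball] using hn⟩⟩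
      · have hdiff : ∀ n : ℕ, μ (U n \ A) < δ n := by
          intro n
          have hsub : U n \ A ⊆ U n \ (A ∩ Metric.ball x₀ n) :=
            diff_subset_diff_right inter_subset_left
          refine (measure_mono hsub).trans_lt ?_
          exact measure_diff_lt_of_lt_add
            (hA.inter (hBorel _ Metric.isOpen_ball)).nullMeasurableSet (hAU n)
            ((measure_mono inter_subset_right).trans_lt (hballs x₀ n)).ne (hU n)
        calc μ ((⋃ n, U n) \ A) ≤ ∑' n, μ (U n \ A) := by
              rw [iUnion_diff]; exact measure_iUnion_le _
          _ ≤ ∑' n, (δ n : ℝ≥0∞) := ENNReal.tsum_le_tsum fun n => (hdiff n).le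
          _ < ε := hδsum
    -- every measurable set has a closed subset with small measure difference
    have step3 : ∀ A : Set X, MeasurableSet A → ∀ ε : ℝ≥0∞, ε ≠ 0 →
        ∃ F, F ⊆ A ∧ IsClosed F ∧ μ (A \ F) < ε := by
      intro A hA ε hε
      obtain ⟨V, hsub, hVo, hV⟩ := step2 Aᶜ hA.compl ε hε
      refine ⟨Vᶜ, compl_subset_comm.mpr hsub, hVo.isClosed_compl, ?_⟩
      have heq : A \ Vᶜ = V \ Aᶜ := by
        ext x; simp only [mem_diff, mem_compl_iff, not_not]; tauto
      rwa [heq]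
    -- Lusin construction
    have hε2 : (ε / 2) ≠ 0 := (ENNReal.half_pos hε.ne').ne'
    obtain ⟨δ₁, hδ₁, hs₁⟩ :=
      ENNReal.exists_pos_sum_of_countable hε2 ↥(TopologicalSpace.countableBasis EReal)
    obtain ⟨δ₂, hδ₂, hs₂⟩ :=
      ENNReal.exists_pos_sum_of_countable hε2 ↥(TopologicalSpace.countableBasis EReal)
    have hmeas : ∀ k : ↥(TopologicalSpace.countableBasis EReal),
        MeasurableSet (u ⁻¹' (k : Set EReal)) := fun k =>
      hu (((TopologicalSpace.isBasis_countableBasis EReal).isOpen k.2).measurableSet)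
    choose Uo hUsub hUo hUm using fun k =>
      step2 _ (hmeas k) (δ₁ k) (ENNReal.coe_ne_zero.2 (hδ₁ k).ne')
    choose F hFsub hFc hFm using fun k =>
      step3 _ (hmeas k) (δ₂ k) (ENNReal.coe_ne_zero.2 (hδ₂ k).ne')
    refine ⟨⋂ k, ((Uo k)ᶜ ∪ F k),
      isClosed_iInter (fun k => (hUo k).isClosed_compl.union (hFc k)), ?_, ?_⟩
    · have hC : (⋂ k, ((Uo k)ᶜ ∪ F k))ᶜ = ⋃ k, (Uo k \ F k) := by
        simp only [compl_iInter, compl_union, compl_compl, diff_eq]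
      rw [hC]
      calc μ (⋃ k, Uo k \ F k) ≤ ∑' k, μ (Uo k \ F k) := measure_iUnion_le _
        _ ≤ ∑' k, ((δ₁ k : ℝ≥0∞) + (δ₂ k : ℝ≥0∞)) := by
            refine ENNReal.tsum_le_tsum fun k => ?_
            have hsplit : Uo k \ F k ⊆
                (Uo k \ u ⁻¹' (k : Set EReal)) ∪ (u ⁻¹' (k : Set EReal) \ F k) := by
              intro x hx
              by_cases h : x ∈ u ⁻¹' (k : Set EReal)
              · exact Or.inr ⟨h, hx.2⟩
              · exact Or.inl ⟨hx.1, h⟩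
            exact (measure_mono hsplit).trans <| (measure_union_le _ _).trans
              (add_le_add (hUm k).le (hFm k).le)
        _ = (∑' k, (δ₁ k : ℝ≥0∞)) + ∑' k, (δ₂ k : ℝ≥0∞) := ENNReal.tsum_add
        _ < ε / 2 + ε / 2 := ENNReal.add_lt_add hs₁ hs₂
        _ = ε := ENNReal.add_halves ε
    · rw [continuousOn_iff']
      intro t ht
      obtain ⟨S, hSb, hSeq⟩ := (TopologicalSpace.isBasis_countableBasis EReal).open_eq_sUnion ht
      refine ⟨⋃ (k : ↥(TopologicalSpace.countableBasis EReal)) (_ : (k : Set EReal) ∈ S), Uo k,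
        isOpen_iUnion (fun k => isOpen_iUnion fun _ => hUo k), ?_⟩
      have hkey : ∀ k : ↥(TopologicalSpace.countableBasis EReal),
          u ⁻¹' (k : Set EReal) ∩ ⋂ j, ((Uo j)ᶜ ∪ F j) = Uo k ∩ ⋂ j, ((Uo j)ᶜ ∪ F j) := by
        intro k
        apply Subset.antisymm
        · exact inter_subset_inter_left _ (hUsub k)
        · rintro x ⟨hxU, hxC⟩
          refine ⟨?_, hxC⟩
          have := mem_iInter.1 hxC k
          rcases this with h | h
          · exact absurd hxU h
          · exact hFsub k h
      have hpre : u ⁻¹' t =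
          ⋃ (k : ↥(TopologicalSpace.countableBasis EReal)) (_ : (k : Set EReal) ∈ S),
            u ⁻¹' (k : Set EReal) := by
        rw [hSeq]
        ext x
        simp only [preimage_sUnion, mem_iUnion, exists_prop, mem_preimage]
        constructor
        · rintro ⟨V, hVS, hxV⟩
          exact ⟨⟨V, hSb hVS⟩, hVS, hxV⟩
        · rintro ⟨k, hkS, hxk⟩
          exact ⟨k, hkS, hxk⟩
      rw [hpre, iUnion_inter, iUnion_inter]
      refine iUnion_congr fun k => ?_
      rw [iUnion_inter, iUnion_inter]
      exact iUnion_congr fun hk => hkey k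
  · -- weak Lusin → Borel regular
    intro hlusin E hE
    set u : X → EReal := E.indicator (fun _ => 1) with hudef
    have hum : Measurable u := measurable_const.indicator hE
    have key : ∀ n : ℕ, ∃ C : Set X, IsClosed C ∧ μ Cᶜ < ((n : ℝ≥0∞) + 1)⁻¹ ∧
        ∃ W, IsOpen W ∧ E ∩ C = W ∩ C := by
      intro n
      have hpos : (0 : ℝ≥0∞) < ((n : ℝ≥0∞) + 1)⁻¹ :=
        ENNReal.inv_pos.2 (by simp [ENNReal.add_eq_top, ENNReal.natCast_ne_top])
      obtain ⟨C, hCc, hCm, hCcont⟩ := hlusin u hum _ hpos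
      refine ⟨C, hCc, hCm, ?_⟩
      rw [continuousOn_iff'] at hCcont
      obtain ⟨W, hWo, hW⟩ := hCcont (Ioi 0) isOpen_Ioi
      have hEpre : u ⁻¹' Ioi 0 = E := by
        ext x
        by_cases hx : x ∈ E <;>
          simp [hudef, indicator_of_mem, indicator_of_notMem, hx, show (0:EReal) < 1 from by norm_num]
      exact ⟨W, hWo, by rw [← hEpre]; exact hW⟩
    choose C hCc hCm W hWo hW using key
    have hEB : E ⊆ (⋃ n, W n ∩ C n) ∪ ⋂ n, (C n)ᶜ := by
      intro x hx
      by_cases h : ∃ n, x ∈ C n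
      · obtain ⟨n, hn⟩ := h
        have : x ∈ W n ∩ C n := by rw [← hW n]; exact ⟨hx, hn⟩
        exact mem_union_left _ (mem_iUnion.2 ⟨n, this⟩)
      · push_neg at h
        exact mem_union_right _ (mem_iInter.2 fun n => h n)
    refine ⟨(⋃ n, W n ∩ C n) ∪ ⋂ n, (C n)ᶜ, ?_, hEB, ?_⟩
    · refine MeasurableSet.union ?_ ?_
      · exact MeasurableSet.iUnion fun n =>
          (borelMS_of_isOpen (hWo n)).inter (borelMS_of_isClosed (hCc n))
      · exact MeasurableSet.iInter fun n =>
          borelMS_of_isOpen (hCc n).isOpen_compl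
    · have hN : μ (⋂ n, (C n)ᶜ) = 0 := by
        by_contra h
        obtain ⟨n, hn⟩ := ENNReal.exists_inv_nat_lt h
        have h2 : μ (⋂ m, (C m)ᶜ) ≤ μ (C n)ᶜ := measure_mono (iInter_subset _ n)
        have h3 : ((n : ℝ≥0∞) + 1)⁻¹ ≤ ((n : ℝ≥0∞))⁻¹ :=
          ENNReal.inv_le_inv' (le_add_of_nonneg_right zero_le_one)
        exact absurd (h2.trans_lt ((hCm n).trans_le h3)) hn.not_gt
      apply le_antisymm
      · calc μ ((⋃ n, W n ∩ C n) ∪ ⋂ n, (C n)ᶜ)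
            ≤ μ (E ∪ ⋂ n, (C n)ᶜ) := by
              refine measure_mono (union_subset_union_left _ ?_)
              refine iUnion_subset fun n => ?_
              rw [← hW n]
              exact inter_subset_left
          _ ≤ μ E + μ (⋂ n, (C n)ᶜ) := measure_union_le _ _
          _ = μ E := by rw [hN, add_zero]
      · exact measure_mono hEB
end
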